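/- arXiv:1511.09026 — 3 statements merged into one kernel-verified Lean document; each statement's English description precedes it below -/
import Mathlib

section
/- Let G be a torsion-free pro-p group such that every open subgroup has finite abelianization (FAb). Then the exponents of the abelianizations U^{ab}, as U ranges over a neighborhood basis of open subgroups of G, are unbounded. Equivalently: if there is an integer k such that exp(U^{ab}) ≤ k for all open subgroups U of G in some neighborhood basis of the identity, then G is trivial or not torsion-free. -/
/-! Suppose `exp(U^{ab}) ≤ k` for all open `U`, and let `x ≠ 1`, `n = k!`. Torsion-freeness gives
`x ^ n ≠ 1`, so some open normal `N` misses `x ^ n`. The open subgroup `W = N ⊔ ⟨x⟩` is cyclic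
modulo `N`, hence `[W, W] ≤ N`; but `W^{ab}` is finite of exponent at most `k`, so its exponent
divides `n` and `x ^ n ∈ [W, W] ≤ N`, a contradiction. -/

namespace Subgroup

variable {G : Type*} [Group G]

theorem commutator_sup_zpowers_le (N : Subgroup G) [N.Normal] (x : G) :
    ⁅N ⊔ zpowers x, N ⊔ zpowers x⁆ ≤ N := by
  suffices ⁅N ⊔ zpowers x, N ⊔ zpowers x⁆.map (QuotientGroup.mk' N) = ⊥ by
    rwa [map_eq_bot_iff, QuotientGroup.ker_mk'] at this
  rw [map_commutator, map_sup, QuotientGroup.map_mk'_self, MonoidHom.map_zpowers, bot_sup_eq,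
    commutator_eq_bot_iff_le_centralizer, le_centralizer_iff_isMulCommutative]
  infer_instance

theorem pow_mem_commutator_of_exponent_dvd (H : Subgroup G) {n : ℕ}
    (hn : Monoid.exponent (Abelianization H) ∣ n) {y : G} (hy : y ∈ H) : y ^ n ∈ ⁅H, H⁆ := by
  rw [← H.map_subtype_commutator]
  refine ⟨⟨y, hy⟩ ^ n, Abelianization.ker_of H ▸ MonoidHom.mem_ker.mpr ?_, rfl⟩
  obtain ⟨c, rfl⟩ := hn
  rw [map_pow, pow_mul, Monoid.pow_exponent_eq_one, one_pow]

end Subgroup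

open Subgroup Nat in
theorem unbounded_exponents_of_torsionfree_FAb_pro_p_general
    (G : Type*) [Group G] [TopologicalSpace G] [IsTopologicalGroup G]
    [CompactSpace G] [TotallyDisconnectedSpace G]
    -- FAb: every open subgroup has finite abelianization
    (hfab : ∀ U : Subgroup G, IsOpen (U : Set G) → Finite (Abelianization ↥U))
    -- torsion-free
    (htf : ∀ x : G, ∀ m : ℕ, 0 < m → x ^ m = 1 → x = 1)
    -- nontrivial
    (hnt : ∃ x : G, x ≠ 1) :
    ¬ ∃ k : ℕ, 0 < k ∧ ∀ U : Subgroup G, IsOpen (U : Set G) →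
        Monoid.exponent (Abelianization ↥U) ≤ k := by
  rintro ⟨k, -, hbound⟩
  obtain ⟨x, hx⟩ := hnt
  have hxn : x ^ k ! ≠ 1 := fun h => hx (htf x _ k.factorial_pos h)
  obtain ⟨N, hN⟩ :=
    ProfiniteGrp.exist_openNormalSubgroup_sub_open_nhds_of_one isOpen_compl_singleton hxn.symm
  set W := N.toSubgroup ⊔ zpowers x
  have hW : IsOpen (W : Set G) := isOpen_mono le_sup_left N.isOpen
  have := hfab W hW
  have hdvd : Monoid.exponent (Abelianization W) ∣ k ! :=
    dvd_factorial (pos_of_ne_zero Monoid.exponent_ne_zero_of_finite) (hbound W hW)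
  exact hN (commutator_sup_zpowers_le _ x <|
    W.pow_mem_commutator_of_exponent_dvd hdvd (mem_sup_right (mem_zpowers x))) rfl

/-- A nontrivial torsion-free FAb pro-`p` group has unbounded exponents of
abelianizations of open subgroups: if the exponents `exp(U^{ab})` are bounded
by some `k ≥ 1` over all open subgroups `U`, then `G` is trivial or has torsion. -/
theorem unbounded_exponents_of_torsionfree_FAb_pro_p
    (p : ℕ) (hp : p.Prime)
    (G : Type*) [Group G] [TopologicalSpace G] [IsTopologicalGroup G]
    [CompactSpace G] [T2Space G] [TotallyDisconnectedSpace G]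
    -- `G` is pro-`p`: open normal subgroups have `p`-group quotients
    (hpro : ∀ (U : Subgroup G) [U.Normal], IsOpen (U : Set G) → IsPGroup p (G ⧸ U))
    -- FAb: every open subgroup has finite abelianization
    (hfab : ∀ U : Subgroup G, IsOpen (U : Set G) → Finite (Abelianization ↥U))
    -- torsion-free
    (htf : ∀ x : G, ∀ m : ℕ, 0 < m → x ^ m = 1 → x = 1)
    -- nontrivial
    (hnt : ∃ x : G, x ≠ 1) :
    ¬ ∃ k : ℕ, 0 < k ∧ ∀ U : Subgroup G, IsOpen (U : Set G) →
        Monoid.exponent (Abelianization ↥U) ≤ k :=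
  unbounded_exponents_of_torsionfree_FAb_pro_p_general G hfab htf hnt
end

section
/- Identity of power series for Golod–Shafarevich type groups: suppose d, r are positive integers with 1 − dT + rT^2 = (1 − αT)(1 − βT) for real numbers α ≥ β > 0 (i.e. d = α + β, r = αβ), and suppose nonnegative integers (b_i)_{i≥1} satisfy the formal power series identity ∏_{i≥1} ((1 − T^{pi})/(1 − T^i))^{b_i} = 1/((1 − αT)(1 − βT)) over ℝ. Then for every positive integer m coprime to p, α^m + β^m = Σ_{i | m} i·b_i. -/
/-!
Apply the logarithmic derivative `f ↦ X f'/f`, which turns products into sums, to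
`∏_{i ≤ m} (1 + Xⁱ + ⋯ + X^{(p-1)i})^{b_i} · (1 - αX)(1 - βX) ≡ 1 (mod X^{m+1})`.
Since `(1 + Xⁱ + ⋯ + X^{(p-1)i})(1 - Xⁱ) = 1 - X^{pi}` and the `X^m`-coefficient of
`X f'/f` for `f = 1 - a Xᵏ` is `-k a^{m/k}` when `k ∣ m` and `0` otherwise, comparing
`X^m`-coefficients gives `∑_{i ∣ m} i b_i - ∑_{pi ∣ m} pi b_i - α^m - β^m = 0`,
and the second sum is empty when `p ∤ m`.
-/

open PowerSeries

open Finset in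
theorem dvd_geom_sum_sub_one {R : Type*} [CommRing R] (x : R) {n : ℕ} (hn : n ≠ 0) :
    x ∣ ∑ j ∈ range n, x ^ j - 1 := by
  obtain ⟨n, rfl⟩ := Nat.exists_eq_add_one_of_ne_zero hn
  rw [sum_range_succ', pow_zero, add_sub_cancel_right]
  exact dvd_sum fun j _ ↦ dvd_pow_self x j.succ_ne_zero

namespace PowerSeries

open Finset

section CommRing

variable {R : Type*} [CommRing R]

theorem X_pow_succ_dvd_prod_Icc_sub_prod_Icc {f : ℕ → R⟦X⟧} (hf : ∀ i, X ^ i ∣ f i - 1)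
    {N n : ℕ} (hN : N ≤ n) :
    X ^ (N + 1) ∣ ∏ i ∈ Icc 1 n, f i - ∏ i ∈ Icc 1 N, f i := by
  rw [← Ideal.mem_span_singleton, ← Ideal.Quotient.eq, map_prod, map_prod]
  refine (prod_subset (Icc_subset_Icc_right hN) fun i hi hiN ↦ ?_).symm
  rw [← map_one (Ideal.Quotient.mk _), Ideal.Quotient.eq, Ideal.mem_span_singleton]
  simp only [mem_Icc, not_and, not_le] at hi hiN
  exact (pow_dvd_pow X (hiN hi.1)).trans (hf i)

theorem X_pow_succ_dvd_prod_Icc_mul_sub_one {f : ℕ → R⟦X⟧} (hf : ∀ i, X ^ i ∣ f i - 1)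
    {g : R⟦X⟧} (hfg : ∀ N, coeff N ((∏ i ∈ Icc 1 N, f i) * g) = if N = 0 then 1 else 0)
    (n : ℕ) : X ^ (n + 1) ∣ (∏ i ∈ Icc 1 n, f i) * g - 1 := by
  refine X_pow_dvd_iff.mpr fun N hN ↦ ?_
  have htrunc := X_pow_dvd_iff.mp
    ((X_pow_succ_dvd_prod_Icc_sub_prod_Icc hf (Nat.le_of_lt_succ hN)).mul_right g) N N.lt_succ_self
  rw [sub_mul, map_sub, sub_eq_zero] at htrunc
  rw [map_sub, htrunc, hfg, coeff_one, sub_self]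

theorem one_sub_C_mul_X_mul_mk_pow (a : R) : (1 - C a * X) * mk (a ^ ·) = 1 := by
  simpa [mul_comm, rescale_mk, rescale_X] using
    congrArg (rescale a) (mk_one_mul_one_sub_eq_one (S := R))

theorem X_pow_dvd_geom_sum_X_pow_sub_one (i : ℕ) {p : ℕ} (hp : p ≠ 0) :
    X ^ i ∣ ∑ j ∈ range p, (X : R⟦X⟧) ^ (i * j) - 1 := by
  simp_rw [pow_mul]
  exact dvd_geom_sum_sub_one _ hp

theorem constantCoeff_geom_sum_X_pow {i p : ℕ} (hi : i ≠ 0) (hp : p ≠ 0) :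
    constantCoeff (∑ j ∈ range p, (X : R⟦X⟧) ^ (i * j)) = 1 := by
  simpa [sub_eq_zero] using
    X_dvd_iff.mp ((dvd_pow_self (X : R⟦X⟧) hi).trans (X_pow_dvd_geom_sum_X_pow_sub_one i hp))

end CommRing

section Field

variable {K : Type*} [Field K]

/-- The formal `X · d/dX log f`. -/
noncomputable def xLogDeriv (f : K⟦X⟧) : K⟦X⟧ := X * d⁄dX K f * f⁻¹

theorem xLogDeriv_mul {f g : K⟦X⟧} (hf : constantCoeff f ≠ 0) (hg : constantCoeff g ≠ 0) :
    xLogDeriv (f * g) = xLogDeriv f + xLogDeriv g := by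
  have hff := PowerSeries.mul_inv_cancel f hf
  have hgg := PowerSeries.mul_inv_cancel g hg
  simp only [xLogDeriv, Derivation.leibniz, smul_eq_mul, PowerSeries.mul_inv_rev]
  linear_combination (X * d⁄dX K f * f⁻¹) * hgg + (X * d⁄dX K g * g⁻¹) * hff

theorem xLogDeriv_pow {f : K⟦X⟧} (hf : constantCoeff f ≠ 0) (n : ℕ) :
    xLogDeriv (f ^ n) = n • xLogDeriv f := by
  induction n with
  | zero => simp [xLogDeriv]
  | succ n ih =>
    rw [pow_succ, xLogDeriv_mul (by simpa using pow_ne_zero n hf) hf, ih, succ_nsmul]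

theorem xLogDeriv_prod {ι : Type*} {s : Finset ι} {f : ι → K⟦X⟧}
    (hf : ∀ i ∈ s, constantCoeff (f i) ≠ 0) :
    xLogDeriv (∏ i ∈ s, f i) = ∑ i ∈ s, xLogDeriv (f i) := by
  classical
  induction s using Finset.induction_on with
  | empty => simp [xLogDeriv]
  | insert a s ha ih =>
    rw [prod_insert ha, sum_insert ha, xLogDeriv_mul (hf a (mem_insert_self a s)),
      ih fun i hi ↦ hf i (mem_insert_of_mem hi)]
    rw [map_prod]
    exact prod_ne_zero_iff.mpr fun i hi ↦ hf i (mem_insert_of_mem hi)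

theorem coeff_xLogDeriv_eq_zero_of_X_pow_succ_dvd_sub_one {f : K⟦X⟧} {n : ℕ}
    (hf : X ^ (n + 1) ∣ f - 1) : coeff n (xLogDeriv f) = 0 := by
  have hdf : X ^ n ∣ d⁄dX K f := by
    refine X_pow_dvd_iff.mpr fun k hk ↦ ?_
    have hfk : coeff (k + 1) f = 0 := by simpa using X_pow_dvd_iff.mp hf (k + 1) (by omega)
    rw [coeff_derivative, hfk, zero_mul]
  refine X_pow_dvd_iff.mp (?_ : X ^ (n + 1) ∣ xLogDeriv f) n n.lt_succ_self
  rw [pow_succ']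
  exact (mul_dvd_mul_left X hdf).mul_right _

theorem xLogDeriv_one_sub_C_mul_X_pow (a : K) {k : ℕ} (hk : k ≠ 0) :
    xLogDeriv (1 - C a * X ^ k) = -(k • expand k hk (mk (a ^ ·) - 1)) := by
  have hinv : (1 - C a * X ^ k)⁻¹ = expand k hk (mk (a ^ ·)) := by
    rw [eq_comm, PowerSeries.eq_inv_iff_mul_eq_one (by simp [hk]), mul_comm]
    simpa [expand_C] using congrArg (expand k hk) (one_sub_C_mul_X_mul_mk_pow a)
  have hder : X * d⁄dX K (1 - C a * X ^ k) = -(k • expand k hk (C a * X)) := by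
    obtain ⟨k, rfl⟩ := Nat.exists_eq_add_one_of_ne_zero hk
    simp [expand_C]
    ring
  have hgeom : C a * X * mk (a ^ ·) = mk (a ^ ·) - 1 := by
    linear_combination -(one_sub_C_mul_X_mul_mk_pow a)
  rw [xLogDeriv, hder, hinv, neg_mul, smul_mul_assoc, ← map_mul, hgeom]

theorem coeff_xLogDeriv_one_sub_C_mul_X_pow (a : K) {k m : ℕ} (hk : k ≠ 0) (hm : m ≠ 0) :
    coeff m (xLogDeriv (1 - C a * X ^ k)) = if k ∣ m then -(k * a ^ (m / k)) else 0 := by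
  rw [xLogDeriv_one_sub_C_mul_X_pow a hk, map_neg, map_nsmul, coeff_expand]
  split_ifs with hkm
  · have hmk : m / k ≠ 0 := (Nat.div_pos (Nat.le_of_dvd (Nat.pos_of_ne_zero hm) hkm)
      (Nat.pos_of_ne_zero hk)).ne'
    simp [hmk, nsmul_eq_mul]
  · simp

theorem coeff_xLogDeriv_one_sub_C_mul_X (a : K) {m : ℕ} (hm : m ≠ 0) :
    coeff m (xLogDeriv (1 - C a * X)) = -a ^ m := by
  simpa using coeff_xLogDeriv_one_sub_C_mul_X_pow a one_ne_zero hm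

theorem coeff_xLogDeriv_geom_sum_X_pow {p i m : ℕ} (hp : p ≠ 0) (hi : i ≠ 0) (hm : m ≠ 0)
    (hpm : ¬ p ∣ m) :
    coeff m (xLogDeriv (∑ j ∈ range p, (X : K⟦X⟧) ^ (i * j))) = if i ∣ m then (i : K) else 0 := by
  have hmul : (∑ j ∈ range p, (X : K⟦X⟧) ^ (i * j)) * (1 - X ^ i) = 1 - X ^ (i * p) := by
    simp_rw [pow_mul]
    exact geom_sum_mul_neg _ _
  have key := congrArg (coeff m ∘ xLogDeriv) hmul
  have hi' := coeff_xLogDeriv_one_sub_C_mul_X_pow (1 : K) hi hm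
  have hip := coeff_xLogDeriv_one_sub_C_mul_X_pow (1 : K) (mul_ne_zero hi hp) hm
  simp only [map_one, one_mul, one_pow, mul_one] at hi' hip
  simp only [Function.comp_apply] at key
  rw [xLogDeriv_mul (by rw [constantCoeff_geom_sum_X_pow hi hp]; exact one_ne_zero)
    (by simp [hi]), map_add, hi', hip,
    if_neg fun h ↦ hpm (dvd_of_mul_left_dvd h)] at key
  split_ifs at key ⊢ <;> linear_combination key

theorem coeff_xLogDeriv_prod_geom_sum_X_pow {p m : ℕ} (hp : p ≠ 0) (hm : m ≠ 0) (hpm : ¬ p ∣ m)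
    (b : ℕ → ℕ) :
    coeff m (xLogDeriv (∏ i ∈ Icc 1 m, (∑ j ∈ range p, (X : K⟦X⟧) ^ (i * j)) ^ b i)) =
      ∑ i ∈ m.divisors, (i : K) * b i := by
  have hi₀ : ∀ i ∈ Icc 1 m, i ≠ 0 := fun i hi ↦ Nat.one_le_iff_ne_zero.mp (mem_Icc.mp hi).1
  have hconst : ∀ i ∈ Icc 1 m, constantCoeff (∑ j ∈ range p, (X : K⟦X⟧) ^ (i * j)) ≠ 0 :=
    fun i hi ↦ by rw [constantCoeff_geom_sum_X_pow (hi₀ i hi) hp]; exact one_ne_zero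
  rw [xLogDeriv_prod fun i hi ↦ by simpa using pow_ne_zero (b i) (hconst i hi), map_sum,
    Nat.divisors, sum_filter, Ico_add_one_right_eq_Icc]
  refine sum_congr rfl fun i hi ↦ ?_
  rw [xLogDeriv_pow (hconst i hi), map_nsmul,
    coeff_xLogDeriv_geom_sum_X_pow hp (hi₀ i hi) hm hpm]
  split_ifs <;> simp [mul_comm]

end Field

end PowerSeries

theorem golod_shafarevich_power_series_identity_general
    (p : ℕ) (hp : p.Prime)
    (α β : ℝ)
    (b : ℕ → ℕ)
    (hps : ∀ N : ℕ,
      (PowerSeries.coeff (R := ℝ) N)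
        ((∏ i ∈ Finset.Icc 1 N,
            (∑ j ∈ Finset.range p, (PowerSeries.X : PowerSeries ℝ) ^ (i * j)) ^ (b i)) *
          ((1 - PowerSeries.C (R := ℝ) α * PowerSeries.X) *
            (1 - PowerSeries.C (R := ℝ) β * PowerSeries.X)))
        = if N = 0 then 1 else 0) :
    ∀ m : ℕ, 0 < m → ¬ p ∣ m →
      α ^ m + β ^ m = ∑ i ∈ m.divisors, (i : ℝ) * (b i) := by
  intro m hm hpm
  have htrunc := X_pow_succ_dvd_prod_Icc_mul_sub_one
    (f := fun i ↦ (∑ j ∈ Finset.range p, (X : ℝ⟦X⟧) ^ (i * j)) ^ b i)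
    (fun i ↦ (X_pow_dvd_geom_sum_X_pow_sub_one i hp.ne_zero).trans (sub_one_dvd_pow_sub_one _ _))
    hps m
  have hconst : constantCoeff (∏ i ∈ Finset.Icc 1 m,
      (∑ j ∈ Finset.range p, (X : ℝ⟦X⟧) ^ (i * j)) ^ b i) ≠ 0 := by
    have hunit := X_dvd_iff.mp ((dvd_pow_self (X : ℝ⟦X⟧) m.succ_ne_zero).trans htrunc)
    rw [map_sub, map_one, sub_eq_zero, map_mul] at hunit
    exact left_ne_zero_of_mul_eq_one hunit
  have key := coeff_xLogDeriv_eq_zero_of_X_pow_succ_dvd_sub_one htrunc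
  rw [xLogDeriv_mul hconst (by simp), xLogDeriv_mul (by simp) (by simp), map_add, map_add,
    coeff_xLogDeriv_prod_geom_sum_X_pow hp.ne_zero hm.ne' hpm,
    coeff_xLogDeriv_one_sub_C_mul_X α hm.ne', coeff_xLogDeriv_one_sub_C_mul_X β hm.ne'] at key
  linear_combination -key

/-- Power series identity for Golod–Shafarevich type groups: if
`∏_{i≥1} ((1−T^{pi})/(1−T^i))^{b_i} = 1/((1−αT)(1−βT))` as formal power series
(each factor being `(1 + T^i + ⋯ + T^{(p−1)i})^{b_i}`, encoded via the
truncated products which agree with the full product in each degree), where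
`1 − dT + rT² = (1−αT)(1−βT)` with `α ≥ β > 0`, then for every `m` coprime
to `p` one has `α^m + β^m = Σ_{i ∣ m} i·b_i`. -/
theorem golod_shafarevich_power_series_identity
    (p : ℕ) (hp : p.Prime) (d r : ℕ) (hd : 0 < d) (hr : 0 < r)
    (α β : ℝ) (hαβ : β ≤ α) (hβ : 0 < β)
    (hsum : α + β = d) (hprod : α * β = r)
    (b : ℕ → ℕ)
    (hps : ∀ N : ℕ,
      (PowerSeries.coeff (R := ℝ) N)
        ((∏ i ∈ Finset.Icc 1 N,
            (∑ j ∈ Finset.range p, (PowerSeries.X : PowerSeries ℝ) ^ (i * j)) ^ (b i)) *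
          ((1 - PowerSeries.C (R := ℝ) α * PowerSeries.X) *
            (1 - PowerSeries.C (R := ℝ) β * PowerSeries.X)))
        = if N = 0 then 1 else 0) :
    ∀ m : ℕ, 0 < m → ¬ p ∣ m →
      α ^ m + β ^ m = ∑ i ∈ m.divisors, (i : ℝ) * (b i) :=
  golod_shafarevich_power_series_identity_general p hp α β b hps
end

section
/- Brumer's Euler characteristic relation for Hilbert–Poincaré series: let U(T) = Σ c_n T^n and P(T) be formal power series over ℝ with nonnegative coefficients satisfying P(T) − dT·U(T) + U(T) − 1 = 0 and P(T) ≤ (Σ_{i=1}^r T^{a_i})·U(T) coefficientwise, where d, r ≥ 1 and a_i ≥ 1 are integers. Then U(T) ≥ 1/(1 − dT + Σ_{i=1}^r T^{a_i}) coefficientwise whenever the right-hand side has nonnegative coefficients. -/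
open PowerSeries

/-- Brumer's relation for Hilbert–Poincaré series: if `U, P` have nonnegative
coefficients, `P − dT·U + U − 1 = 0`, and `P ≤ (Σᵢ T^{aᵢ})·U` coefficientwise,
then `U ≥ 1/(1 − dT + Σᵢ T^{aᵢ})` coefficientwise whenever the latter inverse
`V` (i.e. `(1 − dT + ΣT^{aᵢ})·V = 1`) has nonnegative coefficients. -/
theorem brumer_hilbert_poincare_bound
    (d r : ℕ) (hd : 1 ≤ d) (hr : 1 ≤ r)
    (a : ℕ → ℕ) (ha : ∀ i < r, 1 ≤ a i)
    (U P : PowerSeries ℝ)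
    (hUpos : ∀ n, 0 ≤ (PowerSeries.coeff (R := ℝ) n) U)
    (hPpos : ∀ n, 0 ≤ (PowerSeries.coeff (R := ℝ) n) P)
    (hrel : P - (PowerSeries.C (R := ℝ) d) * PowerSeries.X * U + U - 1 = 0)
    (hineq : ∀ n, (PowerSeries.coeff (R := ℝ) n) P ≤
      (PowerSeries.coeff (R := ℝ) n) ((∑ i ∈ Finset.range r, PowerSeries.X ^ (a i)) * U))
    (V : PowerSeries ℝ)
    (hV : (1 - (PowerSeries.C (R := ℝ) d) * PowerSeries.X +
        ∑ i ∈ Finset.range r, PowerSeries.X ^ (a i)) * V = 1)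
    (hVpos : ∀ n, 0 ≤ (PowerSeries.coeff (R := ℝ) n) V) :
    ∀ n, (PowerSeries.coeff (R := ℝ) n) V ≤ (PowerSeries.coeff (R := ℝ) n) U := by
  intro n
  set S : PowerSeries ℝ := ∑ i ∈ Finset.range r, PowerSeries.X ^ (a i) with hS
  set W : PowerSeries ℝ := S * U - P with hW
  have hWpos : ∀ m, 0 ≤ (PowerSeries.coeff (R := ℝ) m) W := by
    intro m
    rw [hW, map_sub]
    linarith [hineq m]
  have hQU : (1 - (PowerSeries.C (R := ℝ) d) * PowerSeries.X + S) * U = 1 + W := by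
    rw [hW]
    linear_combination hrel
  have hUVW : U = V + V * W := by
    calc U = ((1 - (PowerSeries.C (R := ℝ) d) * PowerSeries.X + S) * V) * U := by rw [hV, one_mul]
    _ = V * ((1 - (PowerSeries.C (R := ℝ) d) * PowerSeries.X + S) * U) := by ring
    _ = V * (1 + W) := by rw [hQU]
    _ = V + V * W := by ring
  have hVWpos : 0 ≤ (PowerSeries.coeff (R := ℝ) n) (V * W) := by
    rw [PowerSeries.coeff_mul]
    apply Finset.sum_nonneg
    intro p _
    exact mul_nonneg (hVpos p.1) (hWpos p.2)
  rw [hUVW, map_add]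
  linarith
end
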